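/- Let n ≥ 2 and 0 ≤ k < n be integers, q* = 2n²/((n−k)(2n−1)), and q* < q < ∞. Let δ ∈ (0,1) with 1/δ ∈ ℕ, and let M̃^k_{ρ,δ} be a linearized k-skeleton maximal operator built from some ρ : {x_1,…,x_u} → [1,2] ∩ δℤ and a face selection (ℓ^i)_{i=1}^u with the following overlap property for some constant C_0 = C_0(n,k): for every coordinate k-plane π, every subset J ⊆ {1,…,u} such that ℓ^i is parallel to π for all i ∈ J, and every affine translate V of π, #{ i ∈ J : ℓ^i ⊆ V } ≤ C_0 |J|^{1 − (n−k)(2n−1)/(2n²)}. Then there exists C = C(k,n,q) > 0 such that for every f ∈ L¹(ℝ^n) supported in 7Q_0 and every λ > 0: λ · |{x ∈ Q_0 : M̃^k_{ρ,δ} f(x) > λ}|^{1/q} ≤ C · δ^{n/q + k − n} · ‖f‖_{L¹}. -/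

import Mathlib

/-!
The superlevel set of `M̃` in `Q₀` is the union of the `N` grid cubes whose thickened face `T_z`
carries an average of `|f|` above `λ`, so it has measure `N δⁿ`. Each `T_z` has measure
`≥ 2ⁿ δ^{n-k}`, hence `λ N 2ⁿ δ^{n-k} ≤ ∑_z ∫_{T_z} |f| ≤ (max_y #{z : y ∈ T_z}) ‖f‖₁`.
The fixed coordinates of every selected face lie in `δ(ℤ + 1/2)`, so a face whose thickening
contains `y` lies in one of `2ⁿ 3ⁿ` translates of coordinate `k`-planes determined by `y`, and the
overlap property bounds the multiplicity by `2ⁿ 3ⁿ C₀ N^e` with `e = 1 - 1/q*`. This gives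
`λ N^{1-e} δ^{n-k} ≤ 3ⁿ C₀ ‖f‖₁`, and `N^{1/q} ≤ N^{1-e}` because `q > q*`.
-/

open MeasureTheory Metric Set

noncomputable section

/-- A `k`-face of the axis-parallel cube in `ℝⁿ` with center `x` and side length `2r`:
the coordinates `j ∈ S` (with `#S = n - k`) are fixed at `x j ± r` (sign given by `ε j`),
the remaining coordinates range over `[x j - r, x j + r]`. -/
def kFace {n : ℕ} (x : Fin n → ℝ) (r : ℝ) (S : Finset (Fin n)) (ε : Fin n → Bool) :
    Set (Fin n → ℝ) :=
  {y | (∀ j ∈ S, y j = x j + (if ε j then r else -r)) ∧ ∀ j ∉ S, |y j - x j| ≤ r}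

/-- The `k`-skeleton `S_k(x,r)` of the axis-parallel cube with center `x` and side
length `2r`: the union of all its `k`-faces. -/
def skeleton (n k : ℕ) (x : Fin n → ℝ) (r : ℝ) : Set (Fin n → ℝ) :=
  ⋃ (S : Finset (Fin n)) (_ : S.card = n - k) (ε : Fin n → Bool), kFace x r S ε

/-- The `k`-skeleton maximal operator with width `δ`:
`M^k_δ f (x) = sup_{1 ≤ r ≤ 2} min_j ⨍_{S^j_{k,δ}(x,r)} |f|`, the minimum being taken
over all `k`-faces of the cube with center `x` and side length `2r`, each face thickened
by `δ` in the `ℓ∞` metric (which is the sup metric on `Fin n → ℝ`). -/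
def skelMax (n k : ℕ) (δ : ℝ) (f : (Fin n → ℝ) → ℝ) (x : Fin n → ℝ) : ℝ :=
  ⨆ r ∈ Set.Icc (1 : ℝ) 2,
    ⨅ (S : {S : Finset (Fin n) // S.card = n - k}) (ε : Fin n → Bool),
      ⨍ y in cthickening δ (kFace x r S.1 ε), |f y|

/-- The unit cube `Q₀ = [0,1)ⁿ`. -/
def Q0 (n : ℕ) : Set (Fin n → ℝ) := Set.univ.pi fun _ => Set.Ico (0 : ℝ) 1

/-- The cube `7Q₀`, concentric with `Q₀` and of side length `7`. -/
def sevenQ0 (n : ℕ) : Set (Fin n → ℝ) := Set.univ.pi fun _ => Set.Icc (-3 : ℝ) 4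

/-- The translate by `v` of the coordinate `k`-plane spanned by the basis vectors
`e_j`, `j ∈ π`. -/
def planeTranslate {n : ℕ} (π : Finset (Fin n)) (v : Fin n → ℝ) : Set (Fin n → ℝ) :=
  {y | ∀ j ∉ π, y j = v j}

/-- Center of the grid cube indexed by `z` in the grid of width `η` on `Q₀`. -/
def gridCenter {n : ℕ} (η : ℝ) {m : ℕ} (z : Fin n → Fin m) : Fin n → ℝ :=
  fun j => η * ((z j : ℝ) + 1 / 2)

/-- Index of the grid cube of width `η` containing `x` (for `x ∈ Q₀`). -/
def zOf {n : ℕ} (η : ℝ) {m : ℕ} (hm : 0 < m) (x : Fin n → ℝ) : Fin n → Fin m :=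
  fun j => ⟨(⌊x j / η⌋).toNat % m, Nat.mod_lt _ hm⟩

/-- The selected `k`-face `ℓᶻ` of the skeleton `S_k(x_z, ρ z)`, where `x_z` is the center
of the grid cube indexed by `z`. -/
def linFace {n : ℕ} (η : ℝ) {m : ℕ} (ρ : (Fin n → Fin m) → ℝ)
    (S : (Fin n → Fin m) → Finset (Fin n)) (ε : (Fin n → Fin m) → Fin n → Bool)
    (z : Fin n → Fin m) : Set (Fin n → ℝ) :=
  kFace (gridCenter η z) (ρ z) (S z) (ε z)

/-- The linearized `k`-skeleton maximal operator `M̃^k_{ρ,η}` of width `η`: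
for `x` in the grid cube indexed by `z`, it averages `|f|` over the closed
`η`-neighborhood (in the `ℓ∞` metric) of the selected face `ℓᶻ`. -/
def linMax {n : ℕ} (η : ℝ) {m : ℕ} (hm : 0 < m) (ρ : (Fin n → Fin m) → ℝ)
    (S : (Fin n → Fin m) → Finset (Fin n)) (ε : (Fin n → Fin m) → Fin n → Bool)
    (f : (Fin n → ℝ) → ℝ) (x : Fin n → ℝ) : ℝ :=
  ⨍ y in cthickening η (linFace η ρ S ε (zOf η hm x)), |f y|

/-- The overlap property for the selected faces: every affine translate `V` of a coordinate
`k`-plane `π` contains at most `C₀ · (#J)^{1 - (n-k)(2n-1)/(2n²)}` of the faces `ℓᶻ`, `z ∈ J`,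
whenever all the faces indexed by `J` are parallel to `π`. -/
def OverlapProp {n : ℕ} (k : ℕ) (η : ℝ) {m : ℕ} (ρ : (Fin n → Fin m) → ℝ)
    (S : (Fin n → Fin m) → Finset (Fin n)) (ε : (Fin n → Fin m) → Fin n → Bool)
    (C0 : ℝ) : Prop :=
  ∀ π : Finset (Fin n), π.card = k →
    ∀ J : Set (Fin n → Fin m),
      (∀ z ∈ J, ∃ v : Fin n → ℝ, linFace η ρ S ε z ⊆ planeTranslate π v) →
      ∀ v : Fin n → ℝ,
        ({z ∈ J | linFace η ρ S ε z ⊆ planeTranslate π v}).ncard ≤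
          C0 * (J.ncard : ℝ) ^ (1 - ((n : ℝ) - k) * (2 * (n : ℝ) - 1) / (2 * (n : ℝ) ^ 2))

/-- Abstract maximal averaging operator `T f (x) = sup_{r ∈ I} ⨍_{A_{x,r}} |f|`. -/
def absMax {n : ℕ} {I : Type*} (A : (Fin n → ℝ) → I → Set (Fin n → ℝ))
    (f : (Fin n → ℝ) → ℝ) (x : Fin n → ℝ) : ℝ :=
  ⨆ r : I, ⨍ y in A x r, |f y|

/-- `goodCount A E lam μ` says: for at least `m/2` of the indices `j`, the subset of
`A j ∩ E` where the multiplicity function `Υ = Σᵢ 1_{Aᵢ ∩ E}` is at most `μ` has measure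
at least `(lam/2)·|A j|`. -/
def goodCount {n m : ℕ} (A : Fin m → Set (Fin n → ℝ)) (E : Set (Fin n → ℝ))
    (lam : ℝ) (μ : ℕ) : Prop :=
  (m : ℝ) / 2 ≤
    ({j : Fin m | ENNReal.ofReal (lam / 2) * volume (A j) ≤
        volume {y ∈ A j ∩ E | ({i : Fin m | y ∈ A i ∩ E}).ncard ≤ μ}}).ncard

section Faces

variable {n : ℕ} {x y : Fin n → ℝ} {r δ : ℝ} {S : Finset (Fin n)} {ε : Fin n → Bool}

def faceVal (x : Fin n → ℝ) (r : ℝ) (ε : Fin n → Bool) : Fin n → ℝ :=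
  fun j => x j + if ε j then r else -r

theorem kFace_subset_planeTranslate : kFace x r S ε ⊆ planeTranslate Sᶜ (faceVal x r ε) :=
  fun _ hy j hj => hy.1 j (by simpa using hj)

theorem isClosed_kFace : IsClosed (kFace x r S ε) := by
  simp only [kFace, ofPred_and, ofPred_forall]
  exact (isClosed_biInter fun j _ => isClosed_eq (continuous_apply j) continuous_const).inter
    (isClosed_biInter fun j _ => isClosed_le (by fun_prop) continuous_const)

theorem kFace_subset_closedBall : kFace x r S ε ⊆ closedBall x |r| := by
  intro y hy
  rw [mem_closedBall, dist_pi_le_iff (abs_nonneg r)]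
  intro j
  rw [Real.dist_eq]
  by_cases hj : j ∈ S
  · rw [hy.1 j hj]
    split_ifs <;> simp
  · exact (hy.2 j hj).trans (le_abs_self r)

theorem volume_cthickening_kFace_lt_top : volume (cthickening δ (kFace x r S ε)) < ⊤ :=
  (isBounded_closedBall.subset kFace_subset_closedBall).cthickening.measure_lt_top

theorem abs_sub_faceVal_le_of_mem_cthickening (hδ : 0 ≤ δ)
    (hy : y ∈ cthickening δ (kFace x r S ε)) {j : Fin n} (hj : j ∈ S) :
    |y j - faceVal x r ε j| ≤ δ := by
  rw [isClosed_kFace.cthickening_eq_biUnion_closedBall hδ] at hy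
  obtain ⟨a, ha, hya⟩ := mem_iUnion₂.mp hy
  calc |y j - faceVal x r ε j| = dist (y j) (a j) := by rw [ha.1 j hj, Real.dist_eq]; rfl
    _ ≤ dist y a := dist_le_pi_dist y a j
    _ ≤ δ := hya

theorem pi_Icc_subset_cthickening_kFace (hδ : 0 ≤ δ) :
    univ.pi (fun j => if j ∈ S then Icc (faceVal x r ε j - δ) (faceVal x r ε j + δ)
      else Icc (x j - r) (x j + r)) ⊆ cthickening δ (kFace x r S ε) := by
  intro y hy
  have hyj := fun j => hy j (mem_univ j)
  refine mem_cthickening_of_dist_le y (fun j => if j ∈ S then faceVal x r ε j else y j) δ _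
    ⟨fun j hj => by simp [hj, faceVal], fun j hj => ?_⟩ ((dist_pi_le_iff hδ).mpr fun j => ?_)
  · have := hyj j
    simp only [hj, if_false, mem_Icc] at this ⊢
    exact abs_sub_le_iff.mpr ⟨by linarith, by linarith⟩
  · by_cases hj : j ∈ S
    · have := hyj j
      simp only [hj, if_true, mem_Icc, Real.dist_eq] at this ⊢
      exact abs_sub_le_iff.mpr ⟨by linarith, by linarith⟩
    · simp [hj, hδ]

theorem le_volume_cthickening_kFace (hr : 1 ≤ r) (hδ : 0 ≤ δ) :
    ENNReal.ofReal (2 ^ n * δ ^ S.card) ≤ volume (cthickening δ (kFace x r S ε)) := by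
  refine le_trans ?_ (measure_mono (pi_Icc_subset_cthickening_kFace hδ))
  have hfactor : ∀ j, ENNReal.ofReal (2 * if j ∈ S then δ else 1) ≤
      volume (if j ∈ S then Icc (faceVal x r ε j - δ) (faceVal x r ε j + δ)
        else Icc (x j - r) (x j + r)) := by
    intro j
    split_ifs <;> rw [Real.volume_Icc] <;> gcongr <;> linarith
  calc ENNReal.ofReal (2 ^ n * δ ^ S.card)
      = ∏ j, ENNReal.ofReal (2 * if j ∈ S then δ else 1) := by
        rw [← ENNReal.ofReal_prod_of_nonneg (fun j _ => by positivity), Finset.prod_mul_distrib,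
          Finset.prod_ite_mem, Finset.prod_const, Finset.prod_const, Finset.card_univ,
          Fintype.card_fin, Finset.univ_inter]
    _ ≤ _ := by
        rw [volume_pi_pi]
        exact Finset.prod_le_prod' fun j _ => hfactor j

end Faces

section Grid

variable {n m : ℕ} {η : ℝ}

def gridCube (η : ℝ) (z : Fin n → Fin m) : Set (Fin n → ℝ) :=
  univ.pi fun j => Ico (η * z j) (η * (z j + 1))

theorem toNat_floor_div_mod_eq_iff (hη : 0 < η) (hηm : η * m = 1) {t : ℝ} (ht : t ∈ Ico 0 1)
    (a : Fin m) : (⌊t / η⌋).toNat % m = a ↔ t ∈ Ico (η * a) (η * (a + 1)) := by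
  have hfloor : ⌊t / η⌋ < m := Int.floor_lt.mpr <| by
    rw [div_lt_iff₀ hη]; push_cast; linarith [ht.2]
  have hfloor0 : 0 ≤ ⌊t / η⌋ := Int.floor_nonneg.mpr (div_nonneg ht.1 hη.le)
  rw [Nat.mod_eq_of_lt (by omega), mem_Ico, ← le_div_iff₀' hη, ← div_lt_iff₀' hη]
  have : (⌊t / η⌋).toNat = a ↔ ⌊t / η⌋ = (a : ℤ) := by omega
  rw [this, Int.floor_eq_iff]
  push_cast
  rfl

theorem mem_Q0_and_zOf_eq_iff (hm : 0 < m) (hη : 0 < η) (hηm : η * m = 1)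
    {x : Fin n → ℝ} {z : Fin n → Fin m} : x ∈ Q0 n ∧ zOf η hm x = z ↔ x ∈ gridCube η z := by
  constructor
  · rintro ⟨hx, rfl⟩ j -
    exact (toNat_floor_div_mod_eq_iff hη hηm (hx j trivial) _).mp rfl
  · intro hx
    have hQ : x ∈ Q0 n := fun j _ => by
      obtain ⟨h0, h1⟩ := hx j trivial
      have hz0 : (0 : ℝ) ≤ z j := Nat.cast_nonneg _
      have hzm : ((z j : ℕ) : ℝ) + 1 ≤ m := by exact_mod_cast (z j).isLt
      constructor <;> nlinarith
    exact ⟨hQ, funext fun j => Fin.ext <|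
      (toNat_floor_div_mod_eq_iff hη hηm (hQ j trivial) _).mpr (hx j trivial)⟩

theorem volume_gridCube (hη : 0 ≤ η) (z : Fin n → Fin m) :
    volume (gridCube η z) = ENNReal.ofReal (η ^ n) := by
  simp only [gridCube, volume_pi_pi, Real.volume_Ico, mul_add, mul_one, add_sub_cancel_left,
    Finset.prod_const, Finset.card_univ, Fintype.card_fin, ENNReal.ofReal_pow hη]

open Function in
theorem pairwise_disjoint_gridCube (hη : 0 < η) :
    Pairwise (Disjoint on (gridCube η : (Fin n → Fin m) → Set (Fin n → ℝ))) := by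
  intro z z' hne
  refine Set.disjoint_left.mpr fun x hx hx' => hne (funext fun j => Fin.ext ?_)
  obtain ⟨h1, h2⟩ := hx j trivial
  obtain ⟨h1', h2'⟩ := hx' j trivial
  have hlt : ∀ a b : ℕ, (η * a ≤ x j ∧ x j < η * (b + 1)) → a ≤ b := fun a b h => by
    have : (a : ℝ) < b + 1 := lt_of_mul_lt_mul_left (h.1.trans_lt h.2) hη.le
    exact_mod_cast Nat.lt_succ_iff.mp (by exact_mod_cast this)
  exact le_antisymm (hlt _ _ ⟨h1, h2'⟩) (hlt _ _ ⟨h1', h2⟩)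

theorem volume_setOf_mem_Q0_zOf_mem (hm : 0 < m) (hη : 0 < η) (hηm : η * m = 1)
    (B : Finset (Fin n → Fin m)) :
    volume {x ∈ Q0 n | zOf η hm x ∈ B} = B.card * ENNReal.ofReal (η ^ n) := by
  have hunion : {x ∈ Q0 n | zOf η hm x ∈ B} = ⋃ z ∈ B, gridCube η z := by
    ext x
    simp only [mem_ofPred_eq, mem_iUnion, exists_prop]
    constructor
    · rintro ⟨hx, hz⟩
      exact ⟨_, hz, (mem_Q0_and_zOf_eq_iff hm hη hηm).mp ⟨hx, rfl⟩⟩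
    · rintro ⟨z, hz, hxz⟩
      obtain ⟨hx, rfl⟩ := (mem_Q0_and_zOf_eq_iff hm hη hηm).mpr hxz
      exact ⟨hx, hz⟩
  rw [hunion, measure_biUnion_finset (fun z _ z' _ h => pairwise_disjoint_gridCube hη h)
    (fun z _ => MeasurableSet.univ_pi fun _ => measurableSet_Ico)]
  simp [volume_gridCube hη.le]

end Grid

section Averages

variable {α : Type*} [MeasurableSpace α] {μ : Measure α} {g : α → ℝ}

theorem mul_measureReal_le_setIntegral_of_lt_setAverage (hg : 0 ≤ g) {s : Set α} {lam : ℝ}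
    (h : lam < ⨍ x in s, g x ∂μ) : lam * μ.real s ≤ ∫ x in s, g x ∂μ := by
  rw [setAverage_eq, smul_eq_mul] at h
  rcases measureReal_nonneg.eq_or_lt with hs | hs
  · rw [← hs, mul_zero]
    exact integral_nonneg hg
  · rw [mul_comm]
    exact ((lt_inv_mul_iff₀ hs).mp h).le

open Classical in
theorem sum_setIntegral_le_mul_integral {ι : Type*} (B : Finset ι) {T : ι → Set α}
    (hT : ∀ i, MeasurableSet (T i)) (hg : Integrable g μ) (hg0 : 0 ≤ g) {M : ℝ}
    (hM : ∀ y, ((B.filter fun i => y ∈ T i).card : ℝ) ≤ M) :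
    ∑ i ∈ B, ∫ y in T i, g y ∂μ ≤ M * ∫ y, g y ∂μ := by
  have hint : ∀ i ∈ B, Integrable ((T i).indicator g) μ := fun i _ => hg.indicator (hT i)
  have hpt : ∀ y, ∑ i ∈ B, (T i).indicator g y = (B.filter fun i => y ∈ T i).card * g y := by
    intro y
    simp [Set.indicator_apply, Finset.sum_ite]
  calc ∑ i ∈ B, ∫ y in T i, g y ∂μ = ∫ y, ∑ i ∈ B, (T i).indicator g y ∂μ := by
        rw [integral_finsetSum _ hint]
        exact Finset.sum_congr rfl fun i _ => (integral_indicator (hT i)).symm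
    _ ≤ ∫ y, M * g y ∂μ :=
        integral_mono (integrable_finsetSum _ hint) (hg.const_mul M) fun y => by
          rw [hpt]
          exact mul_le_mul_of_nonneg_right (hM y) (hg0 y)
    _ = M * ∫ y, g y ∂μ := integral_const_mul M _

end Averages

/-- `1 - overlapExponent n k = 1 / q*`, where `q* = 2n² / ((n - k)(2n - 1))`. -/
def overlapExponent (n k : ℕ) : ℝ :=
  1 - ((n : ℝ) - k) * (2 * (n : ℝ) - 1) / (2 * (n : ℝ) ^ 2)

theorem overlapExponent_nonneg {n k : ℕ} (hk : k ≤ n) : 0 ≤ overlapExponent n k := by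
  rw [overlapExponent, sub_nonneg]
  rcases Nat.eq_zero_or_pos n with rfl | hn
  · simp
  have hkn : (k : ℝ) ≤ n := by exact_mod_cast hk
  rw [div_le_one (by positivity)]
  nlinarith

theorem one_div_lt_one_sub_overlapExponent {n k : ℕ} (hk : k < n) {q : ℝ}
    (hq : 2 * (n : ℝ) ^ 2 / (((n : ℝ) - k) * (2 * (n : ℝ) - 1)) < q) :
    0 < q ∧ 1 / q < 1 - overlapExponent n k := by
  have hkn : (k : ℝ) + 1 ≤ n := by exact_mod_cast hk
  have hcrit : 0 < 2 * (n : ℝ) ^ 2 / (((n : ℝ) - k) * (2 * (n : ℝ) - 1)) := by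
    apply div_pos <;> nlinarith
  refine ⟨hcrit.trans hq, ?_⟩
  rw [overlapExponent, sub_sub_cancel, ← one_div_div (2 * (n : ℝ) ^ 2)]
  exact one_div_lt_one_div_of_lt hcrit hq

section Multiplicity

variable {n m k : ℕ} {δ : ℝ} {ρ : (Fin n → Fin m) → ℝ} {S : (Fin n → Fin m) → Finset (Fin n)}
  {ε : (Fin n → Fin m) → Fin n → Bool} {C0 : ℝ}

/-- For `c : Fin 3` these are the only points of `η (ℤ + 1/2)` within distance `η` of `t`. -/
def nearbyHalfGridPoint (η t : ℝ) (c : Fin 3) : ℝ :=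
  η * (⌈t / η - 3 / 2⌉ + c + 1 / 2)

theorem exists_eq_nearbyHalfGridPoint {η t : ℝ} (hη : 0 < η) {s : ℤ}
    (hs : |t - η * (s + 1 / 2)| ≤ η) :
    ∃ c : Fin 3, η * (s + 1 / 2) = nearbyHalfGridPoint η t c := by
  obtain ⟨h1, h2⟩ := abs_sub_le_iff.mp hs
  have hlo : t / η - 3 / 2 ≤ s := by rw [div_sub' hη.ne', div_le_iff₀ hη]; linarith
  have hhi : (s : ℝ) ≤ t / η - 3 / 2 + 2 := by
    rw [div_sub' hη.ne', div_add' _ _ _ hη.ne', le_div_iff₀ hη]; linarith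
  have hceil_le : ⌈t / η - 3 / 2⌉ ≤ s := Int.ceil_le.mpr hlo
  have hle_ceil : s < ⌈t / η - 3 / 2⌉ + 3 := by
    have : (s : ℝ) < ⌈t / η - 3 / 2⌉ + 3 := by linarith [Int.le_ceil (t / η - 3 / 2)]
    exact_mod_cast this
  refine ⟨⟨(s - ⌈t / η - 3 / 2⌉).toNat, by omega⟩, ?_⟩
  have hcast : (((s - ⌈t / η - 3 / 2⌉).toNat : ℕ) : ℝ) = s - ⌈t / η - 3 / 2⌉ := by
    exact_mod_cast Int.toNat_of_nonneg (by omega)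
  simp only [nearbyHalfGridPoint, hcast]
  ring

theorem exists_subset_planeTranslate_nearbyHalfGridPoint (hδ : 0 < δ) {z : Fin n → Fin m}
    (hρ : ∃ t : ℤ, ρ z = δ * t) {y : Fin n → ℝ} (hy : y ∈ cthickening δ (linFace δ ρ S ε z)) :
    ∃ c : Fin n → Fin 3, linFace δ ρ S ε z ⊆
      planeTranslate (S z)ᶜ fun j => nearbyHalfGridPoint δ (y j) (c j) := by
  obtain ⟨t, ht⟩ := hρ
  have hcoord : ∀ j, ∃ c : Fin 3, j ∈ S z →
      faceVal (gridCenter δ z) (ρ z) (ε z) j = nearbyHalfGridPoint δ (y j) c := by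
    intro j
    by_cases hj : j ∈ S z
    · have hval : faceVal (gridCenter δ z) (ρ z) (ε z) j =
          δ * (((z j : ℤ) + if ε z j then t else -t : ℤ) + 1 / 2) := by
        simp only [faceVal, gridCenter, ht]
        split_ifs <;> push_cast <;> ring
      have hnear := abs_sub_faceVal_le_of_mem_cthickening hδ.le hy hj
      rw [hval] at hnear ⊢
      obtain ⟨c, hc⟩ := exists_eq_nearbyHalfGridPoint hδ hnear
      exact ⟨c, fun _ => hc⟩
    · exact ⟨0, fun h => absurd h hj⟩
  choose c hc using hcoord
  refine ⟨c, fun w hw j hj => ?_⟩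
  have hjS : j ∈ S z := by simpa using hj
  rw [kFace_subset_planeTranslate hw j hj, hc j hjS]

open Classical in
theorem card_filter_linFace_subset_planeTranslate_le (hk : k ≤ n)
    (hS : ∀ z, (S z).card = n - k) (hC0 : 0 ≤ C0) (hOv : OverlapProp k δ ρ S ε C0)
    (B : Finset (Fin n → Fin m)) (σ : Finset (Fin n)) (v : Fin n → ℝ) :
    ((B.filter fun z => S z = σ ∧ linFace δ ρ S ε z ⊆ planeTranslate σᶜ v).card : ℝ) ≤
      C0 * (B.card : ℝ) ^ overlapExponent n k := by
  set F := B.filter fun z => S z = σ ∧ linFace δ ρ S ε z ⊆ planeTranslate σᶜ v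
  rcases F.eq_empty_or_nonempty with hF | ⟨z0, hz0⟩
  · rw [hF, Finset.card_empty, Nat.cast_zero]
    exact mul_nonneg hC0 (Real.rpow_nonneg (Nat.cast_nonneg _) _)
  have hσ : σᶜ.card = k := by
    rw [Finset.card_compl, ← (Finset.mem_filter.mp hz0).2.1, hS, Fintype.card_fin]
    omega
  set J : Set (Fin n → Fin m) := {z | z ∈ B ∧ S z = σ}
  have hpar : ∀ z ∈ J, ∃ v, linFace δ ρ S ε z ⊆ planeTranslate σᶜ v :=
    fun z hz => ⟨_, by rw [← hz.2]; exact kFace_subset_planeTranslate⟩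
  have hJB : (J.ncard : ℝ) ≤ B.card := by
    rw [← Set.ncard_coe_finset]
    exact_mod_cast Set.ncard_le_ncard (fun z (hz : z ∈ J) => hz.1) B.finite_toSet
  calc (F.card : ℝ) = ({z ∈ J | linFace δ ρ S ε z ⊆ planeTranslate σᶜ v}).ncard := by
        rw [← Set.ncard_coe_finset]
        congr 2
        ext z
        simp [F, J, and_assoc]
    _ ≤ C0 * (J.ncard : ℝ) ^ overlapExponent n k := hOv σᶜ hσ J hpar v
    _ ≤ C0 * (B.card : ℝ) ^ overlapExponent n k := by
        gcongr
        exact overlapExponent_nonneg hk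

open Classical in
theorem card_filter_mem_cthickening_linFace_le (hδ : 0 < δ) (hk : k ≤ n)
    (hρ : ∀ z, ∃ t : ℤ, ρ z = δ * t) (hS : ∀ z, (S z).card = n - k) (hC0 : 0 ≤ C0)
    (hOv : OverlapProp k δ ρ S ε C0) (B : Finset (Fin n → Fin m)) (y : Fin n → ℝ) :
    ((B.filter fun z => y ∈ cthickening δ (linFace δ ρ S ε z)).card : ℝ) ≤
      2 ^ n * 3 ^ n * (C0 * (B.card : ℝ) ^ overlapExponent n k) := by
  set fiber : Finset (Fin n) × (Fin n → Fin 3) → Finset (Fin n → Fin m) := fun p =>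
    B.filter fun z => S z = p.1 ∧
      linFace δ ρ S ε z ⊆ planeTranslate p.1ᶜ fun j => nearbyHalfGridPoint δ (y j) (p.2 j)
  have hcover : (B.filter fun z => y ∈ cthickening δ (linFace δ ρ S ε z)) ⊆
      Finset.univ.biUnion fiber := by
    intro z hz
    obtain ⟨hzB, hzy⟩ := Finset.mem_filter.mp hz
    obtain ⟨c, hc⟩ := exists_subset_planeTranslate_nearbyHalfGridPoint hδ (hρ z) hzy
    exact Finset.mem_biUnion.mpr ⟨(S z, c), Finset.mem_univ _, Finset.mem_filter.mpr ⟨hzB, rfl, hc⟩⟩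
  calc _ ≤ ∑ p, ((fiber p).card : ℝ) := by
        exact_mod_cast (Finset.card_le_card hcover).trans Finset.card_biUnion_le
    _ ≤ ∑ _p : Finset (Fin n) × (Fin n → Fin 3), C0 * (B.card : ℝ) ^ overlapExponent n k :=
        Finset.sum_le_sum fun p _ =>
          card_filter_linFace_subset_planeTranslate_le hk hS hC0 hOv B p.1 _
    _ = _ := by
        simp only [Finset.sum_const, Finset.card_univ, Fintype.card_prod, Fintype.card_finset,
          Fintype.card_fun, Fintype.card_fin, nsmul_eq_mul]
        push_cast
        ring

theorem mul_card_mul_pow_le_integral_of_lt_setAverage (hδ : 0 < δ) (hk : k ≤ n)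
    (hρ : ∀ z, ρ z ∈ Icc (1 : ℝ) 2 ∧ ∃ t : ℤ, ρ z = δ * t) (hS : ∀ z, (S z).card = n - k)
    (hC0 : 0 ≤ C0) (hOv : OverlapProp k δ ρ S ε C0)
    {f : (Fin n → ℝ) → ℝ} (hf : Integrable f) {lam : ℝ} (hlam : 0 ≤ lam)
    (B : Finset (Fin n → Fin m))
    (hB : ∀ z ∈ B, lam < ⨍ y in cthickening δ (linFace δ ρ S ε z), |f y|) :
    lam * B.card * δ ^ (n - k) ≤
      3 ^ n * C0 * (B.card : ℝ) ^ overlapExponent n k * ∫ y, |f y| := by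
  have hvol : ∀ z, 2 ^ n * δ ^ (n - k) ≤ volume.real (cthickening δ (linFace δ ρ S ε z)) := by
    intro z
    have h := le_volume_cthickening_kFace (x := gridCenter δ z) (S := S z) (ε := ε z)
      (hρ z).1.1 hδ.le
    rw [hS z] at h
    exact (ENNReal.ofReal_le_iff_le_toReal volume_cthickening_kFace_lt_top.ne).mp h
  have hsum := sum_setIntegral_le_mul_integral B (fun _ => isClosed_cthickening.measurableSet)
    hf.abs (fun y => abs_nonneg (f y))
    (card_filter_mem_cthickening_linFace_le hδ hk (fun z => (hρ z).2) hS hC0 hOv B)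
  refine le_of_mul_le_mul_left ?_ (by positivity : (0 : ℝ) < 2 ^ n)
  calc 2 ^ n * (lam * B.card * δ ^ (n - k)) = ∑ _z ∈ B, lam * (2 ^ n * δ ^ (n - k)) := by
        rw [Finset.sum_const, nsmul_eq_mul]
        ring
    _ ≤ ∑ z ∈ B, lam * volume.real (cthickening δ (linFace δ ρ S ε z)) := by
        gcongr with z
        exact hvol z
    _ ≤ ∑ z ∈ B, ∫ y in cthickening δ (linFace δ ρ S ε z), |f y| :=
        Finset.sum_le_sum fun z hz =>
          mul_measureReal_le_setIntegral_of_lt_setAverage (fun y => abs_nonneg (f y)) (hB z hz)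
    _ ≤ _ := hsum
    _ = _ := by ring

end Multiplicity

theorem mul_rpow_le_of_mul_le_mul_rpow {n k : ℕ} (hk : k ≤ n) {N δ q e K I lam : ℝ}
    (hN : 1 ≤ N) (hδ : 0 < δ) (hqe : 1 / q ≤ 1 - e) (hlam : 0 ≤ lam)
    (h : lam * N * δ ^ (n - k) ≤ K * N ^ e * I) :
    lam * (N * δ ^ n) ^ (1 / q) ≤ K * δ ^ ((n : ℝ) / q + k - n) * I := by
  have hN0 : 0 < N := by linarith
  have hδsplit : δ ^ ((n : ℝ) / q) = δ ^ (n - k) * δ ^ ((n : ℝ) / q + k - n) := by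
    rw [← Real.rpow_natCast, ← Real.rpow_add hδ, Nat.cast_sub hk]
    ring_nf
  calc lam * (N * δ ^ n) ^ (1 / q) = lam * N ^ (1 / q) * δ ^ ((n : ℝ) / q) := by
        rw [Real.mul_rpow hN0.le (by positivity), ← Real.rpow_natCast, ← Real.rpow_mul hδ.le]
        ring_nf
    _ ≤ lam * N ^ (1 - e) * δ ^ ((n : ℝ) / q) := by gcongr
    _ = lam * N * δ ^ (n - k) / N ^ e * δ ^ ((n : ℝ) / q + k - n) := by
        rw [Real.rpow_sub hN0, Real.rpow_one, hδsplit]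
        ring
    _ ≤ K * N ^ e * I / N ^ e * δ ^ ((n : ℝ) / q + k - n) := by gcongr
    _ = K * δ ^ ((n : ℝ) / q + k - n) * I := by
        field_simp [(Real.rpow_pos_of_pos hN0 e).ne']

theorem ofReal_mul_rpow_le_of_mul_le_mul_rpow {n k N : ℕ} (hk : k ≤ n) {δ q e K I lam : ℝ}
    (hδ : 0 < δ) (hq : 0 < q) (hqe : 1 / q ≤ 1 - e) (hlam : 0 ≤ lam) (hI : 0 ≤ I)
    (h : lam * N * δ ^ (n - k) ≤ K * (N : ℝ) ^ e * I) :
    ENNReal.ofReal lam * ((N : ENNReal) * ENNReal.ofReal (δ ^ n)) ^ (1 / q) ≤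
      ENNReal.ofReal (K * δ ^ ((n : ℝ) / q + k - n)) * ENNReal.ofReal I := by
  rcases Nat.eq_zero_or_pos N with rfl | hN
  · simp [ENNReal.zero_rpow_of_pos (inv_pos.mpr hq)]
  rw [← ENNReal.ofReal_natCast, ← ENNReal.ofReal_mul (Nat.cast_nonneg _),
    ENNReal.ofReal_rpow_of_pos (by positivity), ← ENNReal.ofReal_mul hlam, ← ENNReal.ofReal_mul' hI]
  exact ENNReal.ofReal_le_ofReal
    (mul_rpow_le_of_mul_le_mul_rpow hk (by exact_mod_cast hN) hδ hqe hlam h)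

theorem linMax_weak_type_high_general (n k : ℕ) (hk : k < n)
    (q : ℝ)
    (hq2 : 2 * (n : ℝ) ^ 2 / (((n : ℝ) - k) * (2 * (n : ℝ) - 1)) < q)
    (C0 : ℝ) (hC0 : 0 < C0) :
    ∃ C > 0, ∀ δ ∈ Set.Ioo (0 : ℝ) 1, ∀ (m : ℕ) (hm : 0 < m), δ * m = 1 →
      ∀ (ρ : (Fin n → Fin m) → ℝ),
        (∀ z, ρ z ∈ Set.Icc (1 : ℝ) 2 ∧ ∃ t : ℤ, ρ z = δ * t) →
      ∀ (S : (Fin n → Fin m) → Finset (Fin n)), (∀ z, (S z).card = n - k) →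
      ∀ (ε : (Fin n → Fin m) → Fin n → Bool), OverlapProp k δ ρ S ε C0 →
      ∀ f : (Fin n → ℝ) → ℝ, Integrable f volume → Function.support f ⊆ sevenQ0 n →
      ∀ lam : ℝ, 0 < lam →
        ENNReal.ofReal lam *
            volume {x ∈ Q0 n | lam < linMax δ hm ρ S ε f x} ^ (1 / q) ≤
          ENNReal.ofReal (C * δ ^ ((n : ℝ) / q + k - n)) * eLpNorm f 1 volume := by
  obtain ⟨hq, hqe⟩ := one_div_lt_one_sub_overlapExponent hk hq2
  refine ⟨3 ^ n * C0, by positivity, ?_⟩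
  rintro δ ⟨hδ, -⟩ m hm hδm ρ hρ S hS ε hOv f hf - lam hlam
  set B := Finset.univ.filter fun z => lam < ⨍ y in cthickening δ (linFace δ ρ S ε z), |f y|
  have hlevel : {x ∈ Q0 n | lam < linMax δ hm ρ S ε f x} = {x ∈ Q0 n | zOf δ hm x ∈ B} := by
    simp [B, linMax]
  have hcount := mul_card_mul_pow_le_integral_of_lt_setAverage hδ hk.le hρ hS hC0.le hOv hf
    hlam.le B fun z hz => (Finset.mem_filter.mp hz).2
  rw [hlevel, volume_setOf_mem_Q0_zOf_mem hm hδ hδm, eLpNorm_one_eq_lintegral_enorm,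
    ← ofReal_integral_norm_eq_lintegral_enorm hf]
  exact ofReal_mul_rpow_le_of_mul_le_mul_rpow hk.le hδ hq hqe.le hlam.le
    (integral_nonneg fun y => norm_nonneg (f y)) hcount

/-- weak-type `(1,q)` bound for the linearized operator, `q > q*`.
If the face selection has the overlap property with constant `C₀ = C₀(n,k)`, then there is
`C = C(k,n,q) > 0` such that for every `f ∈ L¹` supported in `7Q₀` and every `λ > 0`,
`λ |{x ∈ Q₀ : M̃^k_{ρ,δ} f (x) > λ}|^{1/q} ≤ C δ^{n/q + k - n} ‖f‖_{L¹}`. -/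
theorem linMax_weak_type_high (n k : ℕ) (hn : 2 ≤ n) (hk : k < n)
    (q : ℝ) (hq1 : 1 < q)
    (hq2 : 2 * (n : ℝ) ^ 2 / (((n : ℝ) - k) * (2 * (n : ℝ) - 1)) < q)
    (C0 : ℝ) (hC0 : 0 < C0) :
    ∃ C > 0, ∀ δ ∈ Set.Ioo (0 : ℝ) 1, ∀ (m : ℕ) (hm : 0 < m), δ * m = 1 →
      ∀ (ρ : (Fin n → Fin m) → ℝ),
        (∀ z, ρ z ∈ Set.Icc (1 : ℝ) 2 ∧ ∃ t : ℤ, ρ z = δ * t) →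
      ∀ (S : (Fin n → Fin m) → Finset (Fin n)), (∀ z, (S z).card = n - k) →
      ∀ (ε : (Fin n → Fin m) → Fin n → Bool), OverlapProp k δ ρ S ε C0 →
      ∀ f : (Fin n → ℝ) → ℝ, Integrable f volume → Function.support f ⊆ sevenQ0 n →
      ∀ lam : ℝ, 0 < lam →
        ENNReal.ofReal lam *
            volume {x ∈ Q0 n | lam < linMax δ hm ρ S ε f x} ^ (1 / q) ≤
          ENNReal.ofReal (C * δ ^ ((n : ℝ) / q + k - n)) * eLpNorm f 1 volume :=
  linMax_weak_type_high_general n k hk q hq2 C0 hC0
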